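/- Let G be a finite simple graph in which every vertex has positive degree, with adjacency matrix A, degrees d_i, and symmetrically normalized adjacency matrix S = D^{-1/2} A D^{-1/2}. Fix a real number α with 0 < α < 1 and a vector b : V → ℝ, and define the local and global consistency cost E(f) = (1/2) Σ_{i,j} A_{ij} (f_i/√d_i − f_j/√d_j)² + (1/α − 1) Σ_i (f_i − b_i)². Then E has a unique minimizer over f : V → ℝ, namely f* = (1−α)(I − αS)^{-1} b; i.e. E(f*) < E(f) for every f ≠ f*. -/

import Mathlib

/-!
With `g = D^{-1/2} f`, the smoothness term is `gᵀ L g = fᵀ (I - S) f`, where `L = D - A` is the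
graph Laplacian; hence `I - S = D^{-1/2} L D^{-1/2}` is positive semidefinite and
`E(f) = fᵀ (I - S) f + c ‖f - b‖²` with `c = 1/α - 1 > 0` is a strictly convex quadratic.
Expanding `E(x + h)` around a point `x` with `(I - S) x + c (x - b) = 0` leaves
`E(x) + hᵀ (I - S) h + c ‖h‖² > E(x)` for `h ≠ 0`, and multiplying that stationarity equation
by `α` turns it into `(I - α S) x = (1 - α) b`. The matrix `I - α S = α (I - S) + (1 - α) I` is
positive definite, so `x = f*`.
-/

namespace Matrix

variable {n : Type*} [Fintype n]

def tikhonovCost (L : Matrix n n ℝ) (c : ℝ) (b f : n → ℝ) : ℝ :=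
  f ⬝ᵥ L *ᵥ f + c * ((f - b) ⬝ᵥ (f - b))

theorem tikhonovCost_add {L : Matrix n n ℝ} (hL : L.IsSymm) (c : ℝ) (b x h : n → ℝ) :
    tikhonovCost L c b (x + h) =
      tikhonovCost L c b x + 2 * (h ⬝ᵥ (L *ᵥ x + c • (x - b))) +
        (h ⬝ᵥ L *ᵥ h + c * (h ⬝ᵥ h)) := by
  have hxh : x ⬝ᵥ L *ᵥ h = h ⬝ᵥ L *ᵥ x := by
    rw [dotProduct_mulVec, ← mulVec_transpose, hL.eq, dotProduct_comm]
  have hsub : x + h - b = (x - b) + h := by abel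
  simp only [tikhonovCost, hsub, mulVec_add, add_dotProduct, dotProduct_add, dotProduct_smul,
    smul_eq_mul, hxh, dotProduct_comm (x - b) h]
  ring

theorem PosSemidef.tikhonovCost_lt_of_stationary {L : Matrix n n ℝ} (hL : L.PosSemidef)
    {c : ℝ} (hc : 0 < c) {b x : n → ℝ} (hx : L *ᵥ x + c • (x - b) = 0) {f : n → ℝ}
    (hf : f ≠ x) : tikhonovCost L c b x < tikhonovCost L c b f := by
  have hLsymm : L.IsSymm := (conjTranspose_eq_transpose_of_trivial L).symm.trans hL.1
  obtain ⟨h, hh, rfl⟩ : ∃ h, h ≠ 0 ∧ f = x + h := ⟨f - x, sub_ne_zero.2 hf, by abel⟩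
  rw [tikhonovCost_add hLsymm, hx, dotProduct_zero, mul_zero, add_zero, lt_add_iff_pos_right]
  have hLh : 0 ≤ h ⬝ᵥ L *ᵥ h := by simpa using hL.dotProduct_mulVec_nonneg h
  have hhh : 0 < h ⬝ᵥ h := dotProduct_self_star_pos_iff.2 hh
  positivity

theorem isUnit_one_sub_smul_of_posSemidef_one_sub [DecidableEq n] {S : Matrix n n ℝ}
    (hS : (1 - S).PosSemidef) {α : ℝ} (hα0 : 0 ≤ α) (hα1 : α < 1) : IsUnit (1 - α • S) := by
  have hsplit : 1 - α • S = α • (1 - S) + (1 - α) • 1 := by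
    rw [smul_sub, sub_smul, one_smul]; abel
  rw [hsplit]
  exact (PosDef.posSemidef_add (hS.smul hα0) (PosDef.one.smul (sub_pos.2 hα1))).isUnit

theorem one_sub_mulVec_add_smul_sub_eq_zero [DecidableEq n] {S : Matrix n n ℝ} {α : ℝ}
    (hα : α ≠ 0) {b x : n → ℝ} (hx : (1 - α • S) *ᵥ x = (1 - α) • b) :
    (1 - S) *ᵥ x + (1 / α - 1) • (x - b) = 0 := by
  ext i
  have hxi := congrFun hx i
  simp only [sub_mulVec, one_mulVec, smul_mulVec, Pi.sub_apply, Pi.smul_apply,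
    smul_eq_mul] at hxi
  simp only [sub_mulVec, one_mulVec, Pi.add_apply, Pi.sub_apply, Pi.smul_apply, smul_eq_mul,
    Pi.zero_apply]
  field_simp
  linear_combination hxi

end Matrix

open Matrix

namespace SimpleGraph

variable {V : Type*} [Fintype V] [DecidableEq V] (G : SimpleGraph V) [DecidableRel G.Adj]

noncomputable def invSqrtDegMatrix : Matrix V V ℝ := diagonal fun v => (√(G.degree v))⁻¹

noncomputable def normalizedAdjMatrix : Matrix V V ℝ :=
  G.invSqrtDegMatrix * G.adjMatrix ℝ * G.invSqrtDegMatrix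

noncomputable def normalizedLapMatrix : Matrix V V ℝ :=
  G.invSqrtDegMatrix * G.lapMatrix ℝ * G.invSqrtDegMatrix

theorem posSemidef_normalizedLapMatrix : G.normalizedLapMatrix.PosSemidef := by
  have h := (G.posSemidef_lapMatrix ℝ).conjTranspose_mul_mul_same G.invSqrtDegMatrix
  rwa [invSqrtDegMatrix, diagonal_conjTranspose, star_trivial] at h

theorem normalizedLapMatrix_eq_one_sub (hdeg : ∀ v, 0 < G.degree v) :
    G.normalizedLapMatrix = 1 - G.normalizedAdjMatrix := by
  have hdiag : G.invSqrtDegMatrix * G.degMatrix ℝ * G.invSqrtDegMatrix = 1 := by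
    rw [invSqrtDegMatrix, degMatrix, diagonal_mul_diagonal, diagonal_mul_diagonal,
      ← diagonal_one]
    congr 1 with v
    have hd : (0 : ℝ) < G.degree v := mod_cast hdeg v
    have hs : √(G.degree v : ℝ) ≠ 0 := (Real.sqrt_pos.2 hd).ne'
    field_simp
    exact (Real.sq_sqrt hd.le).symm
  rw [normalizedLapMatrix, lapMatrix, mul_sub, sub_mul, hdiag, normalizedAdjMatrix]

theorem dotProduct_normalizedLapMatrix_mulVec (f : V → ℝ) :
    f ⬝ᵥ G.normalizedLapMatrix *ᵥ f = (1 / 2) * ∑ i, ∑ j, G.adjMatrix ℝ i j *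
      (f i / √(G.degree i) - f j / √(G.degree j)) ^ 2 := by
  have hg : G.invSqrtDegMatrix *ᵥ f = fun i => f i / √(G.degree i) := by
    ext i; rw [invSqrtDegMatrix, mulVec_diagonal, div_eq_inv_mul]
  have hquad : f ⬝ᵥ G.normalizedLapMatrix *ᵥ f =
      (G.invSqrtDegMatrix *ᵥ f) ⬝ᵥ G.lapMatrix ℝ *ᵥ (G.invSqrtDegMatrix *ᵥ f) := by
    rw [normalizedLapMatrix, ← mulVec_mulVec, ← mulVec_mulVec, dotProduct_mulVec,
      ← mulVec_transpose, invSqrtDegMatrix, diagonal_transpose]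
  rw [hquad, ← toLinearMap₂'_apply', lapMatrix_toLinearMap₂', hg]
  simp only [adjMatrix_apply, ite_mul, one_mul, zero_mul]
  ring

end SimpleGraph

/-- The local and global consistency cost
`E(f) = (1/2) Σ_{i,j} A_{ij} (f_i/√d_i − f_j/√d_j)² + (1/α − 1) Σ_i (f_i − b_i)²`
over a finite simple graph with all degrees positive has the unique minimizer
`f* = (1−α)(I − αS)⁻¹ b`, where `S = D^{-1/2} A D^{-1/2}` and `0 < α < 1`. -/
theorem local_global_consistency_unique_minimizer
    {V : Type*} [Fintype V] [DecidableEq V]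
    (G : SimpleGraph V) [DecidableRel G.Adj]
    (hdeg : ∀ v : V, 0 < G.degree v)
    (S : Matrix V V ℝ)
    (hS : S = Matrix.diagonal (fun v => (Real.sqrt (G.degree v))⁻¹) *
      G.adjMatrix ℝ * Matrix.diagonal (fun v => (Real.sqrt (G.degree v))⁻¹))
    (α : ℝ) (hα0 : 0 < α) (hα1 : α < 1) (b : V → ℝ)
    (E : (V → ℝ) → ℝ)
    (hE : ∀ f : V → ℝ, E f =
      (1 / 2) * ∑ i, ∑ j, G.adjMatrix ℝ i j *
          (f i / Real.sqrt (G.degree i) - f j / Real.sqrt (G.degree j)) ^ 2 +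
        (1 / α - 1) * ∑ i, (f i - b i) ^ 2)
    (fstar : V → ℝ)
    (hfstar : fstar = (1 - α) • (1 - α • S)⁻¹.mulVec b) :
    ∀ f : V → ℝ, f ≠ fstar → E fstar < E f := by
  intro f hf
  replace hS : S = G.normalizedAdjMatrix := hS
  subst hS
  have hL := G.normalizedLapMatrix_eq_one_sub hdeg
  have hPSD : (1 - G.normalizedAdjMatrix).PosSemidef := hL ▸ G.posSemidef_normalizedLapMatrix
  have hcost : ∀ g, E g = tikhonovCost (1 - G.normalizedAdjMatrix) (1 / α - 1) b g := by
    intro g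
    rw [hE, tikhonovCost, ← hL, G.dotProduct_normalizedLapMatrix_mulVec]
    simp only [dotProduct, Pi.sub_apply, sq]
  have hc : 0 < 1 / α - 1 := by
    rw [one_div, sub_pos]
    exact (one_lt_inv₀ hα0).2 hα1
  have hunit := isUnit_one_sub_smul_of_posSemidef_one_sub hPSD hα0.le hα1
  have hsolve : (1 - α • G.normalizedAdjMatrix) *ᵥ fstar = (1 - α) • b := by
    rw [hfstar, mulVec_smul, mulVec_mulVec, mul_nonsing_inv _ ((isUnit_iff_isUnit_det _).1 hunit),
      one_mulVec]
  rw [hcost, hcost]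
  exact hPSD.tikhonovCost_lt_of_stationary hc
    (one_sub_mulVec_add_smul_sub_eq_zero hα0.ne' hsolve) hf
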